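/- arXiv:math/0606260 — 2 statements merged into one kernel-verified Lean document; each statement's English description precedes it below -/
import Mathlib

section
/- Let Φ be the poset of closed subsets of Δ ordered by inclusion, and let c : colim_{α ∈ Φ} GL_n(R)_α → GL_n(R) be the canonical homomorphism induced by the inclusions GL_n(R)_α ≤ GL_n(R) (the colimit taken in the category of groups with structure maps the inclusions GL_n(R)_α ↪ GL_n(R)_β for α ⊆ β). Then the kernel of c is isomorphic to K₂(n,R), the kernel of the homomorphism φ : St_n(R) → GL_n(R) sending x_ij(r) to ε_ij(r). -/
/-- The elementary matrix `ε_{ij}(r)`. -/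
def elemMat {n : ℕ} {R : Type*} [Ring R] (i j : Fin n) (r : R) :
    Matrix (Fin n) (Fin n) R :=
  1 + Matrix.single i j r

/-- The elementary matrix `ε_{ij}(r)` as a unit (invertible matrix) for `i ≠ j`. -/
def elemUnit {n : ℕ} {R : Type*} [Ring R] (i j : Fin n) (hij : i ≠ j) (r : R) :
    (Matrix (Fin n) (Fin n) R)ˣ where
  val := elemMat i j r
  inv := elemMat i j (-r)
  val_inv := by
    have h0 : Matrix.single i j r * Matrix.single i j (-r) = 0 :=
      Matrix.single_mul_single_of_ne _ _ _ _ hij.symm _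
    simp [elemMat, mul_add, add_mul, h0, ← Matrix.single_add, add_assoc]
  inv_val := by
    have h0 : Matrix.single i j (-r) * Matrix.single i j r = 0 :=
      Matrix.single_mul_single_of_ne _ _ _ _ hij.symm _
    simp [elemMat, mul_add, add_mul, h0, ← Matrix.single_add, add_assoc]

/-- `GL_n(R)_α`. -/
def glSub {n : ℕ} (R : Type*) [Ring R] (α : Set (Fin n × Fin n)) :
    Subgroup (Matrix (Fin n) (Fin n) R)ˣ :=
  Subgroup.closure
    {u | ∃ (i j : Fin n) (hij : i ≠ j) (r : R), (i, j) ∈ α ∧ u = elemUnit i j hij r}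

open scoped commutatorElement

/-- The Steinberg relations on the generators `x_{ij}(r)`, `(i,j) ∈ α`, `r ∈ R`. -/
def stRels (n : ℕ) (R : Type*) [Ring R] (α : Set (Fin n × Fin n))
    (hc : ∀ i j k : Fin n, (i, j) ∈ α → (j, k) ∈ α → i ≠ k → (i, k) ∈ α) :
    Set (FreeGroup ({p : Fin n × Fin n // p ∈ α} × R)) :=
  {w | ∃ (p : {p : Fin n × Fin n // p ∈ α}) (a b : R),
      w = FreeGroup.of (p, a) * FreeGroup.of (p, b) * (FreeGroup.of (p, a + b))⁻¹} ∪
  {w | ∃ (p q : {p : Fin n × Fin n // p ∈ α}) (a b : R),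
      p.1.2 ≠ q.1.1 ∧ p.1.1 ≠ q.1.2 ∧
      w = ⁅FreeGroup.of (p, a), FreeGroup.of (q, b)⁆} ∪
  {w | ∃ (p q : {p : Fin n × Fin n // p ∈ α}) (a b : R) (h : p.1.2 = q.1.1)
      (hil : p.1.1 ≠ q.1.2),
      w = ⁅FreeGroup.of (p, a), FreeGroup.of (q, b)⁆ *
        (FreeGroup.of
          (⟨(p.1.1, q.1.2), hc p.1.1 p.1.2 q.1.2 p.2 (by rw [h]; exact q.2) hil⟩, a * b))⁻¹}

/-- The set `Δ` of all off-diagonal positions. -/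
def deltaSet (n : ℕ) : Set (Fin n × Fin n) := {p | p.1 ≠ p.2}

/-- `α` is a closed subset of the off-diagonal positions. -/
def IsClosedSubset {n : ℕ} (α : Set (Fin n × Fin n)) : Prop :=
  (∀ p ∈ α, p.1 ≠ p.2) ∧ ∀ i j k : Fin n, (i, j) ∈ α → (j, k) ∈ α → (i, k) ∈ α

/-- The Steinberg group `St_n(R)`. -/
abbrev Steinberg (n : ℕ) (R : Type) [Ring R] :=
  PresentedGroup (stRels n R (deltaSet n)
    (fun i _ k _ _ hik => show (i, k) ∈ deltaSet n from hik))

/-!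
For a closed set `α` the map `St(α) → GL_n(R)_α`, `x_{ij}(r) ↦ ε_{ij}(r)`, is an isomorphism.
This goes by induction on `|α|`. As `α` is a strict partial order, some column `m` meets `α`
while row `m` does not. The generators `x_{im}(r)` then commute and generate a normal subgroup,
so every element of `St(α)` is `s · x` with `s` coming from `St(α ∖ column m)` and `x` a product
of generators of column `m`. The image of `s` fixes the `m`-th unit vector, while that of `x`
adds the entries of `x` to it; so if `s · x ↦ 1` then `x = 1`, and `s = 1` by induction.

Hence the `GL_n(R)_α` form a cocone with vertex `St_n(R)`. Conversely, `x_{ij}(r) ↦ κ(ε_{ij}(r))`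
defines `St_n(R) → colim GL_n(R)_α`, since each Steinberg relation holds inside `GL_n(R)_γ` for
a closed `γ` of at most three positions. The two maps are mutually inverse, and this
identification turns `c` into `φ`.
-/

section ClosedSubsets

variable {n : ℕ} {α : Set (Fin n × Fin n)}

/-- The hypothesis of `stRels`. Closed sets satisfy it, and so does `deltaSet n`, which is not
closed. -/
abbrev TransOffDiag (α : Set (Fin n × Fin n)) : Prop :=
  ∀ i j k : Fin n, (i, j) ∈ α → (j, k) ∈ α → i ≠ k → (i, k) ∈ α

theorem IsClosedSubset.transOffDiag (hα : IsClosedSubset α) : TransOffDiag α :=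
  fun i j k hij hjk _ => hα.2 i j k hij hjk

theorem IsClosedSubset.fst_ne_snd (hα : IsClosedSubset α) : ∀ p ∈ α, p.1 ≠ p.2 :=
  hα.1

theorem IsClosedSubset.subset_deltaSet (hα : IsClosedSubset α) : α ⊆ deltaSet n :=
  hα.1

theorem isClosedSubset_prod {A B : Set (Fin n)} (hAB : Disjoint A B) : IsClosedSubset (A ×ˢ B) :=
  ⟨fun _ hp h => hAB.ne_of_mem hp.1 hp.2 h,
    fun _ _ _ hij hjk => (hAB.ne_of_mem hjk.1 hij.2 rfl).elim⟩

theorem isClosedSubset_singleton {a b : Fin n} (hab : a ≠ b) : IsClosedSubset {(a, b)} :=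
  Set.singleton_prod_singleton (a := a) (b := b) ▸
    isClosedSubset_prod (Set.disjoint_singleton.2 hab)

theorem isClosedSubset_triple {i j l : Fin n} (hij : i ≠ j) (hjl : j ≠ l) (hil : i ≠ l) :
    IsClosedSubset {(i, j), (j, l), (i, l)} := by
  constructor
  · rintro _ (rfl | rfl | rfl) <;> assumption
  · simp only [Set.mem_insert_iff, Set.mem_singleton_iff, Prod.mk.injEq]
    grind

theorem IsClosedSubset.exists_sink (hα : IsClosedSubset α) (hne : α.Nonempty) :
    ∃ m, (∃ i, (i, m) ∈ α) ∧ ∀ k, (m, k) ∉ α := by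
  let r : Fin n → Fin n → Prop := fun k m => (m, k) ∈ α
  have : IsTrans (Fin n) r := ⟨fun a b c hab hbc => hα.2 c b a hbc hab⟩
  have : Std.Irrefl r := ⟨fun a haa => hα.fst_ne_snd _ haa rfl⟩
  obtain ⟨⟨i, j⟩, hij⟩ := hne
  obtain ⟨m, ⟨i', hm⟩, hmin⟩ :=
    (Finite.wellFounded_of_trans_of_irrefl r).has_min {m | ∃ i, (i, m) ∈ α} ⟨j, i, hij⟩
  exact ⟨m, ⟨i', hm⟩, fun k hk => hmin k ⟨m, hk⟩ hk⟩

theorem IsClosedSubset.sep_snd_ne (hα : IsClosedSubset α) (m : Fin n) :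
    IsClosedSubset {p ∈ α | p.2 ≠ m} :=
  ⟨fun p hp => hα.fst_ne_snd p hp.1, fun i j k hij hjk => ⟨hα.2 i j k hij.1 hjk.1, hjk.2⟩⟩

end ClosedSubsets

theorem Subgroup.closure_normal_of_conj_mem {G : Type*} [Group G] {S T : Set G}
    (hT : Subgroup.closure T = ⊤)
    (hconj : ∀ t ∈ T, ∀ s ∈ S,
      t * s * t⁻¹ ∈ Subgroup.closure S ∧ t⁻¹ * s * t ∈ Subgroup.closure S) :
    (Subgroup.closure S).Normal := by
  have conj_le : ∀ g : G, (∀ s ∈ S, g * s * g⁻¹ ∈ Subgroup.closure S) →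
      ∀ x ∈ Subgroup.closure S, g * x * g⁻¹ ∈ Subgroup.closure S := by
    intro g hg x hx
    have : (Subgroup.closure S).map (MulAut.conj g).toMonoidHom ≤ Subgroup.closure S := by
      rw [MonoidHom.map_closure, Subgroup.closure_le]
      rintro _ ⟨s, hs, rfl⟩
      exact hg s hs
    exact this ⟨x, hx, rfl⟩
  refine ⟨fun x hx g => ?_⟩
  have hg : g ∈ Subgroup.closure T := hT ▸ Subgroup.mem_top g
  induction hg using Subgroup.closure_induction'' generalizing x with
  | mem t ht => exact conj_le t (fun s hs => (hconj t ht s hs).1) x hx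
  | inv_mem t ht => exact conj_le t⁻¹ (fun s hs => by simpa using (hconj t ht s hs).2) x hx
  | one => simpa using hx
  | mul g h _ _ ihg ihh =>
    simpa [mul_assoc] using ihg _ (ihh x hx)

section ElementaryMatrices

variable {n : ℕ} {R : Type*} [Ring R]

theorem elemUnit_mul_elemUnit {i j : Fin n} (hij : i ≠ j) (a b : R) :
    elemUnit i j hij a * elemUnit i j hij b = elemUnit i j hij (a + b) := by
  ext : 1
  simp [elemUnit, elemMat, add_mul, mul_add, Matrix.single_mul_single_of_ne _ _ _ _ hij.symm,
    Matrix.single_add, add_assoc]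

theorem commute_elemUnit {i j k l : Fin n} (hij : i ≠ j) (hkl : k ≠ l) (hjk : j ≠ k)
    (hil : i ≠ l) (a b : R) : Commute (elemUnit i j hij a) (elemUnit k l hkl b) := by
  refine Units.ext ?_
  simp [elemUnit, elemMat, add_mul, mul_add, Matrix.single_mul_single_of_ne _ _ _ _ hjk,
    Matrix.single_mul_single_of_ne _ _ _ _ hil.symm, add_comm, add_left_comm]

theorem commutatorElement_elemUnit {i j l : Fin n} (hij : i ≠ j) (hjl : j ≠ l) (hil : i ≠ l)
    (a b : R) : ⁅elemUnit i j hij a, elemUnit j l hjl b⁆ = elemUnit i l hil (a * b) := by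
  ext : 1
  simp [commutatorElement_def, elemUnit, elemMat, add_mul, mul_add, Matrix.single_mul_single_same,
    Matrix.single_mul_single_of_ne _ _ _ _ hij.symm,
    Matrix.single_mul_single_of_ne _ _ _ _ hjl.symm,
    Matrix.single_mul_single_of_ne _ _ _ _ hil.symm, ← Matrix.single_neg]
  abel

end ElementaryMatrices

abbrev StGroup {n : ℕ} (R : Type*) [Ring R] (α : Set (Fin n × Fin n)) (hc : TransOffDiag α) :=
  PresentedGroup (stRels n R α hc)

section StGroup

variable {n : ℕ} {R : Type*} [Ring R] {α : Set (Fin n × Fin n)} {hc : TransOffDiag α}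

def stX (p : {p : Fin n × Fin n // p ∈ α}) (r : R) : StGroup R α hc :=
  PresentedGroup.of (p, r)

def stLift {G : Type*} [Group G] (f : {p : Fin n × Fin n // p ∈ α} → R → G)
    (hadd : ∀ p a b, f p a * f p b = f p (a + b))
    (hcomm : ∀ p q : {p : Fin n × Fin n // p ∈ α}, p.1.2 ≠ q.1.1 → p.1.1 ≠ q.1.2 →
      ∀ a b, Commute (f p a) (f q b))
    (hcomp : ∀ (p q : {p : Fin n × Fin n // p ∈ α}) (h : p.1.2 = q.1.1) (hil : p.1.1 ≠ q.1.2)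
      (a b : R), ⁅f p a, f q b⁆ = f ⟨(p.1.1, q.1.2), hc _ _ _ p.2 (h ▸ q.2) hil⟩ (a * b)) :
    StGroup R α hc →* G :=
  PresentedGroup.toGroup (f := fun x => f x.1 x.2) <| by
    rintro w ((⟨p, a, b, rfl⟩ | ⟨p, q, a, b, h, hil, rfl⟩) | ⟨p, q, a, b, h, hil, rfl⟩)
    · simp [hadd]
    · simpa [commutatorElement_eq_one_iff_mul_comm] using (hcomm p q h hil a b).eq
    · simp [hcomp p q h hil]

@[simp]
theorem stLift_stX {G : Type*} [Group G] (f : {p : Fin n × Fin n // p ∈ α} → R → G)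
    (hadd hcomm hcomp) (p : {p : Fin n × Fin n // p ∈ α}) (r : R) :
    stLift (hc := hc) f hadd hcomm hcomp (stX p r) = f p r :=
  PresentedGroup.toGroup.of _

theorem StGroup.hom_ext {G : Type*} [Group G] {f g : StGroup R α hc →* G}
    (h : ∀ p r, f (stX p r) = g (stX p r)) : f = g :=
  PresentedGroup.ext fun x => h x.1 x.2

theorem StGroup.closure_stX :
    Subgroup.closure (Set.range fun x : {p : Fin n × Fin n // p ∈ α} × R =>
      (stX x.1 x.2 : StGroup R α hc)) = ⊤ :=
  PresentedGroup.closure_range_of _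

theorem stX_mul_stX (p : {p : Fin n × Fin n // p ∈ α}) (a b : R) :
    (stX p a : StGroup R α hc) * stX p b = stX p (a + b) := by
  simpa [stX, PresentedGroup.of] using
    PresentedGroup.mk_eq_mk_of_mul_inv_mem (rels := stRels n R α hc)
      (Or.inl (Or.inl ⟨p, a, b, rfl⟩))

theorem commute_stX (p q : {p : Fin n × Fin n // p ∈ α}) (h : p.1.2 ≠ q.1.1)
    (hil : p.1.1 ≠ q.1.2) (a b : R) :
    Commute (stX p a : StGroup R α hc) (stX q b) := by
  simpa [commutatorElement_eq_one_iff_mul_comm, Commute, SemiconjBy, stX, PresentedGroup.of] using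
    PresentedGroup.one_of_mem (rels := stRels n R α hc)
      (Or.inl (Or.inr ⟨p, q, a, b, h, hil, rfl⟩))

theorem commutatorElement_stX (p q : {p : Fin n × Fin n // p ∈ α}) (h : p.1.2 = q.1.1)
    (hil : p.1.1 ≠ q.1.2) (a b : R) :
    ⁅(stX p a : StGroup R α hc), stX q b⁆ =
      stX ⟨(p.1.1, q.1.2), hc _ _ _ p.2 (h ▸ q.2) hil⟩ (a * b) := by
  simpa [stX, PresentedGroup.of] using
    PresentedGroup.mk_eq_mk_of_mul_inv_mem (rels := stRels n R α hc)
      (Or.inr ⟨p, q, a, b, h, hil, rfl⟩)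

theorem stX_zero (p : {p : Fin n × Fin n // p ∈ α}) : (stX p 0 : StGroup R α hc) = 1 := by
  simpa using stX_mul_stX (hc := hc) p (0 : R) 0

theorem stX_inv (p : {p : Fin n × Fin n // p ∈ α}) (a : R) :
    (stX p a : StGroup R α hc)⁻¹ = stX p (-a) := by
  rw [inv_eq_iff_mul_eq_one, stX_mul_stX, add_neg_cancel, stX_zero]

end StGroup

section GLSub

variable {n : ℕ} {R : Type*} [Ring R] {α : Set (Fin n × Fin n)}

theorem glSub_mono {β : Set (Fin n × Fin n)} (h : α ⊆ β) : glSub R α ≤ glSub R β :=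
  Subgroup.closure_mono fun _ ⟨i, j, hij, r, hmem, hu⟩ => ⟨i, j, hij, r, h hmem, hu⟩

theorem elemUnit_mem_glSub {i j : Fin n} (hij : i ≠ j) (r : R) (h : (i, j) ∈ α) :
    elemUnit i j hij r ∈ glSub R α :=
  Subgroup.subset_closure ⟨i, j, hij, r, h, rfl⟩

theorem glSub_hom_ext {G : Type*} [Group G] {f g : glSub R α →* G}
    (h : ∀ (i j : Fin n) (hij : i ≠ j) (r : R) (hmem : (i, j) ∈ α),
      f ⟨elemUnit i j hij r, elemUnit_mem_glSub hij r hmem⟩ =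
        g ⟨elemUnit i j hij r, elemUnit_mem_glSub hij r hmem⟩) :
    f = g := by
  ext ⟨x, hx⟩
  induction hx using Subgroup.closure_induction with
  | mem x hx =>
    obtain ⟨i, j, hij, r, hmem, rfl⟩ := hx
    exact h i j hij r hmem
  | one => exact (map_one f).trans (map_one g).symm
  | mul x y hx hy ihx ihy =>
    exact (map_mul f ⟨x, hx⟩ ⟨y, hy⟩).trans ((congrArg₂ _ ihx ihy).trans (map_mul g _ _).symm)
  | inv x hx ih =>
    exact (map_inv f ⟨x, hx⟩).trans ((congrArg _ ih).trans (map_inv g _).symm)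

/-- Left multiplication fixes `single m m 1` exactly when the `m`-th column is the `m`-th unit
vector. -/
theorem glSub_le_stabilizer_single {m : Fin n} (hm : ∀ p ∈ α, p.2 ≠ m) :
    glSub R α ≤ MulAction.stabilizer (Matrix (Fin n) (Fin n) R)ˣ (Matrix.single m m (1 : R)) := by
  refine (Subgroup.closure_le _).2 ?_
  rintro _ ⟨i, j, hij, r, hmem, rfl⟩
  simp [MulAction.mem_stabilizer_iff, Units.smul_def, elemUnit, elemMat, add_mul,
    Matrix.single_mul_single_of_ne _ _ _ _ (hm _ hmem)]

end GLSub

section StToGLSub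

variable {n : ℕ} {R : Type*} [Ring R]

def stMap {α β : Set (Fin n × Fin n)} {hcα : TransOffDiag α} {hcβ : TransOffDiag β}
    (hsub : α ⊆ β) : StGroup R α hcα →* StGroup R β hcβ :=
  stLift (fun p r => stX ⟨p.1, hsub p.2⟩ r) (fun _ => stX_mul_stX _)
    (fun p q => commute_stX ⟨p.1, hsub p.2⟩ ⟨q.1, hsub q.2⟩)
    (fun p q => commutatorElement_stX ⟨p.1, hsub p.2⟩ ⟨q.1, hsub q.2⟩)

@[simp]
theorem stMap_stX {α β : Set (Fin n × Fin n)} {hcα : TransOffDiag α} {hcβ : TransOffDiag β}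
    (hsub : α ⊆ β) (p : {p : Fin n × Fin n // p ∈ α}) (r : R) :
    stMap (hcα := hcα) (hcβ := hcβ) hsub (stX p r) = stX ⟨p.1, hsub p.2⟩ r :=
  stLift_stX (hc := hcα) _ _ _ _ p r

variable {α : Set (Fin n × Fin n)} {hc : TransOffDiag α}

def stToGLSub (hΔ : ∀ p ∈ α, p.1 ≠ p.2) : StGroup R α hc →* glSub R α :=
  stLift (fun p r => ⟨elemUnit p.1.1 p.1.2 (hΔ _ p.2) r, elemUnit_mem_glSub _ r p.2⟩)
    (fun p a b => Subtype.ext (elemUnit_mul_elemUnit (hΔ _ p.2) a b))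
    (fun p q h hil a b => (commute_elemUnit (hΔ _ p.2) (hΔ _ q.2) h hil a b).of_map
      (f := (glSub R α).subtype) Subtype.val_injective)
    (by
      rintro ⟨⟨i, j⟩, hp⟩ ⟨⟨j', l⟩, hq⟩ (rfl : j = j') hil a b
      exact Subtype.ext (commutatorElement_elemUnit (hΔ _ hp) (hΔ _ hq) hil a b))

@[simp]
theorem coe_stToGLSub_stX (hΔ : ∀ p ∈ α, p.1 ≠ p.2) (p : {p : Fin n × Fin n // p ∈ α})
    (r : R) :
    (stToGLSub (hc := hc) hΔ (stX p r) : (Matrix (Fin n) (Fin n) R)ˣ) =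
      elemUnit p.1.1 p.1.2 (hΔ _ p.2) r := by
  rw [stToGLSub, stLift_stX]

theorem stToGLSub_surjective (hΔ : ∀ p ∈ α, p.1 ≠ p.2) :
    Function.Surjective (stToGLSub (R := R) (hc := hc) hΔ) := by
  rintro ⟨x, hx⟩
  induction hx using Subgroup.closure_induction with
  | mem x hx =>
    obtain ⟨i, j, hij, r, hmem, rfl⟩ := hx
    exact ⟨stX ⟨(i, j), hmem⟩ r, Subtype.ext (coe_stToGLSub_stX hΔ _ r)⟩
  | one => exact ⟨1, map_one _⟩
  | mul x y hx hy ihx ihy =>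
    obtain ⟨a, ha⟩ := ihx
    obtain ⟨b, hb⟩ := ihy
    exact ⟨a * b, by rw [map_mul, ha, hb]; rfl⟩
  | inv x hx ih =>
    obtain ⟨a, ha⟩ := ih
    exact ⟨a⁻¹, by rw [map_inv, ha]; rfl⟩

theorem coe_stToGLSub_stMap {β : Set (Fin n × Fin n)} {hcβ : TransOffDiag β} (hsub : α ⊆ β)
    (hΔ : ∀ p ∈ β, p.1 ≠ p.2) (s : StGroup R α hc) :
    (stToGLSub (hc := hcβ) hΔ (stMap hsub s) : (Matrix (Fin n) (Fin n) R)ˣ) =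
      stToGLSub (fun p hp => hΔ p (hsub hp)) s := by
  have : (glSub R β).subtype.comp ((stToGLSub (hc := hcβ) hΔ).comp (stMap hsub)) =
      (glSub R α).subtype.comp (stToGLSub (hc := hc) (fun p hp => hΔ p (hsub hp))) :=
    StGroup.hom_ext fun p r => by simp
  exact DFunLike.congr_fun this s

end StToGLSub

section Injectivity

open scoped Classical

variable {n : ℕ} {R : Type*} [Ring R] {α : Set (Fin n × Fin n)} {hc : TransOffDiag α}

noncomputable def colHom (hΔ : ∀ p ∈ α, p.1 ≠ p.2) (m : Fin n) :
    (∀ _ : {i : Fin n // (i, m) ∈ α}, Multiplicative R) →* StGroup R α hc :=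
  MonoidHom.noncommPiCoprod
    (fun i => MonoidHom.mk' (fun r => stX ⟨(i.1, m), i.2⟩ r.toAdd)
      fun a b => (stX_mul_stX _ a.toAdd b.toAdd).symm)
    (fun i i' _ _ _ =>
      commute_stX ⟨(i.1, m), i.2⟩ ⟨(i'.1, m), i'.2⟩ (hΔ _ i'.2).symm (hΔ _ i.2) _ _)

theorem colHom_mulSingle (hΔ : ∀ p ∈ α, p.1 ≠ p.2) {m : Fin n} (i : {i : Fin n // (i, m) ∈ α})
    (r : Multiplicative R) :
    colHom (hc := hc) hΔ m (Pi.mulSingle i r) = stX ⟨(i.1, m), i.2⟩ r.toAdd :=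
  MonoidHom.noncommPiCoprod_mulSingle _ _ _

theorem coe_stToGLSub_colHom (hΔ : ∀ p ∈ α, p.1 ≠ p.2) (m : Fin n)
    (v : ∀ _ : {i : Fin n // (i, m) ∈ α}, Multiplicative R) :
    ((stToGLSub hΔ (colHom (hc := hc) hΔ m v) : (Matrix (Fin n) (Fin n) R)ˣ) :
      Matrix (Fin n) (Fin n) R) = 1 + ∑ i, Matrix.single i.1 m (v i).toAdd := by
  have hsq : ∀ v w : (∀ _ : {i : Fin n // (i, m) ∈ α}, Multiplicative R),
      (∑ i, Matrix.single i.1 m (v i).toAdd) * ∑ i, Matrix.single i.1 m (w i).toAdd = 0 := by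
    intro v w
    rw [Finset.sum_mul_sum]
    exact Finset.sum_eq_zero fun i _ => Finset.sum_eq_zero fun j _ =>
      Matrix.single_mul_single_of_ne _ _ _ _ (hΔ _ j.2).symm _
  let colMat : (∀ _ : {i : Fin n // (i, m) ∈ α}, Multiplicative R) →* Matrix (Fin n) (Fin n) R :=
    { toFun v := 1 + ∑ i, Matrix.single i.1 m (v i).toAdd
      map_one' := by simp
      map_mul' v w := by
        simp only [add_mul, mul_add, one_mul, mul_one, hsq, add_zero, Pi.mul_apply, toAdd_mul,
          Matrix.single_add, Finset.sum_add_distrib]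
        abel }
  have : (Units.coeHom _).comp ((glSub R α).subtype.comp ((stToGLSub hΔ).comp
      (colHom (hc := hc) hΔ m))) = colMat :=
    MonoidHom.pi_ext fun i r => by
      simp [colMat, colHom_mulSingle, elemUnit, elemMat, Pi.mulSingle_apply, apply_ite]
  exact DFunLike.congr_fun this v

theorem colHom_eq_one_of_mem_stabilizer (hΔ : ∀ p ∈ α, p.1 ≠ p.2) {m : Fin n}
    (v : ∀ _ : {i : Fin n // (i, m) ∈ α}, Multiplicative R)
    (h : (stToGLSub hΔ (colHom (hc := hc) hΔ m v) : (Matrix (Fin n) (Fin n) R)ˣ) ∈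
      MulAction.stabilizer (Matrix (Fin n) (Fin n) R)ˣ (Matrix.single m m (1 : R))) :
    v = 1 := by
  rw [MulAction.mem_stabilizer_iff, Units.smul_def, smul_eq_mul, coe_stToGLSub_colHom, add_mul,
    one_mul, add_eq_left, Finset.sum_mul] at h
  simp only [Matrix.single_mul_single_same, mul_one] at h
  funext i
  have := congrFun₂ h i.1 m
  simpa [Matrix.sum_apply, Matrix.single_apply, ← Subtype.ext_iff] using this

variable (hc) in
def colSubgroup (m : Fin n) : Subgroup (StGroup R α hc) :=
  Subgroup.closure
    (Set.range fun x : {i : Fin n // (i, m) ∈ α} × R => stX ⟨(x.1.1, m), x.1.2⟩ x.2)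

theorem colSubgroup_le_range (hΔ : ∀ p ∈ α, p.1 ≠ p.2) (m : Fin n) :
    colSubgroup (R := R) hc m ≤ (colHom hΔ m).range :=
  (Subgroup.closure_le _).2 <| by
    rintro _ ⟨⟨i, r⟩, rfl⟩
    exact ⟨Pi.mulSingle i (Multiplicative.ofAdd r), colHom_mulSingle hΔ i _⟩

/-- Conjugating `x_{im}(r)` by `x_{jk}(a)`, where `j ≠ m` by `hm`, gives `x_{im}(r)` if `k ≠ i`
and `x_{jm}(ar) x_{im}(r)` if `k = i`. -/
theorem stX_mul_stX_mul_inv_mem_colSubgroup {m : Fin n}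
    (hm : ∀ k, (m, k) ∉ α) (p : {p : Fin n × Fin n // p ∈ α}) (a : R)
    (i : {i : Fin n // (i, m) ∈ α}) (r : R) :
    stX p a * stX ⟨(i.1, m), i.2⟩ r * (stX p a)⁻¹ ∈ colSubgroup (R := R) hc m := by
  obtain ⟨⟨j, k⟩, hjk⟩ := p
  obtain ⟨i, hi⟩ := i
  have hjm : j ≠ m := fun h => hm k (h ▸ hjk)
  have hgen : ∀ (i : Fin n) (hi : (i, m) ∈ α) (r : R), stX ⟨(i, m), hi⟩ r ∈ colSubgroup hc m :=
    fun i hi r => Subgroup.subset_closure ⟨(⟨i, hi⟩, r), rfl⟩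
  by_cases hki : k = i
  · subst hki
    have hconj : stX ⟨(j, k), hjk⟩ a * stX ⟨(k, m), hi⟩ r * (stX ⟨(j, k), hjk⟩ a)⁻¹ =
        ⁅(stX ⟨(j, k), hjk⟩ a : StGroup R α hc), stX ⟨(k, m), hi⟩ r⁆ * stX ⟨(k, m), hi⟩ r := by
      rw [commutatorElement_def]
      group
    rw [hconj, commutatorElement_stX _ _ rfl hjm]
    exact mul_mem (hgen _ _ _) (hgen _ _ _)
  · rw [(commute_stX ⟨(j, k), hjk⟩ ⟨(i, m), hi⟩ hki hjm a r).eq, mul_inv_cancel_right]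
    exact hgen _ _ _

theorem colSubgroup_normal {m : Fin n} (hm : ∀ k, (m, k) ∉ α) :
    (colSubgroup (R := R) hc m).Normal := by
  refine Subgroup.closure_normal_of_conj_mem StGroup.closure_stX ?_
  rintro _ ⟨⟨p, a⟩, rfl⟩ _ ⟨⟨i, r⟩, rfl⟩
  refine ⟨stX_mul_stX_mul_inv_mem_colSubgroup hm p a i r, ?_⟩
  have := stX_mul_stX_mul_inv_mem_colSubgroup (hc := hc) hm p (-a) i r
  rw [stX_inv, neg_neg] at this
  rwa [stX_inv]

theorem exists_eq_stMap_mul_colHom (hα : IsClosedSubset α) {m : Fin n} (hm : ∀ k, (m, k) ∉ α)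
    (w : StGroup R α hc) :
    ∃ (s : StGroup R {p ∈ α | p.2 ≠ m} (hα.sep_snd_ne m).transOffDiag)
      (v : ∀ _ : {i : Fin n // (i, m) ∈ α}, Multiplicative R),
      w = stMap (Set.sep_subset _ _) s * colHom hα.fst_ne_snd m v := by
  have := colSubgroup_normal (R := R) (hc := hc) hm
  have htop : (stMap (R := R) (hcα := (hα.sep_snd_ne m).transOffDiag) (hcβ := hc)
      (Set.sep_subset _ _)).range ⊔ colSubgroup hc m = ⊤ := by
    rw [eq_top_iff, ← StGroup.closure_stX, Subgroup.closure_le]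
    rintro _ ⟨⟨⟨⟨i, j⟩, hij⟩, r⟩, rfl⟩
    by_cases hj : j = m
    · subst hj
      exact Subgroup.mem_sup_right (Subgroup.subset_closure ⟨(⟨i, hij⟩, r), rfl⟩)
    · exact Subgroup.mem_sup_left ⟨stX ⟨(i, j), hij, hj⟩ r, stMap_stX _ _ _⟩
  have hw := htop ▸ Subgroup.mem_top w
  rw [← SetLike.mem_coe, Subgroup.mul_normal] at hw
  obtain ⟨_, ⟨s, rfl⟩, x, hx, hw⟩ := hw
  obtain ⟨v, rfl⟩ := colSubgroup_le_range hα.fst_ne_snd m hx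
  exact ⟨s, v, hw.symm⟩

theorem colHom_eq_one_of_stToGLSub_eq_one (hα : IsClosedSubset α) {m : Fin n}
    {s : StGroup R {p ∈ α | p.2 ≠ m} (hα.sep_snd_ne m).transOffDiag}
    {v : ∀ _ : {i : Fin n // (i, m) ∈ α}, Multiplicative R}
    (hw : stToGLSub (hc := hc) hα.fst_ne_snd
      (stMap (Set.sep_subset _ _) s * colHom hα.fst_ne_snd m v) = 1) :
    v = 1 := by
  have hα' := hα.sep_snd_ne m
  have hs : (stToGLSub hα'.fst_ne_snd s : (Matrix (Fin n) (Fin n) R)ˣ) ∈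
      MulAction.stabilizer (Matrix (Fin n) (Fin n) R)ˣ (Matrix.single m m (1 : R)) :=
    glSub_le_stabilizer_single (fun _ hp => hp.2) (stToGLSub hα'.fst_ne_snd s).2
  refine colHom_eq_one_of_mem_stabilizer (hc := hc) hα.fst_ne_snd v ?_
  rw [map_mul] at hw
  have hw := congrArg Subtype.val hw
  rw [Subgroup.coe_mul, coe_stToGLSub_stMap, OneMemClass.coe_one, mul_eq_one_iff_eq_inv'] at hw
  exact hw ▸ inv_mem hs

theorem stToGLSub_injective (hα : IsClosedSubset α) :
    Function.Injective (stToGLSub (R := R) (hc := hc) hα.fst_ne_snd) := by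
  induction α using WellFoundedLT.induction with
  | ind α ih =>
  rw [injective_iff_map_eq_one]
  intro w hw
  rcases α.eq_empty_or_nonempty with rfl | hne
  · have htop : (⊤ : Subgroup (StGroup R ∅ hc)) = ⊥ := by
      rw [← StGroup.closure_stX, Set.range_eq_empty, Subgroup.closure_empty]
    exact Subgroup.mem_bot.1 (htop ▸ Subgroup.mem_top w)
  obtain ⟨m, ⟨i, hi⟩, hm⟩ := hα.exists_sink hne
  obtain ⟨s, v, rfl⟩ := exists_eq_stMap_mul_colHom hα hm w
  obtain rfl := colHom_eq_one_of_stToGLSub_eq_one hα hw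
  rw [map_one, mul_one] at hw ⊢
  have hsub : {p ∈ α | p.2 ≠ m} ⊂ α :=
    (Set.ssubset_iff_of_subset (Set.sep_subset _ _)).2 ⟨_, hi, fun h => h.2 rfl⟩
  have hs : s = 1 := by
    refine ih _ hsub (hα.sep_snd_ne m) (Subtype.ext ?_)
    rw [← coe_stToGLSub_stMap (hcβ := hc) (Set.sep_subset _ _) hα.fst_ne_snd, hw]
    rfl
  rw [hs, map_one]

end Injectivity

section Colimit

variable {n : ℕ} {R : Type} [Ring R]

noncomputable def stEquivGLSub {α : Set (Fin n × Fin n)} (hα : IsClosedSubset α) :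
    StGroup R α hα.transOffDiag ≃* glSub R α :=
  MulEquiv.ofBijective (stToGLSub hα.fst_ne_snd)
    ⟨stToGLSub_injective hα, stToGLSub_surjective hα.fst_ne_snd⟩

noncomputable def glSubToSt {α : Set (Fin n × Fin n)} (hα : IsClosedSubset α) :
    glSub R α →* Steinberg n R :=
  (stMap hα.subset_deltaSet).comp (stEquivGLSub hα).symm.toMonoidHom

theorem glSubToSt_elemUnit {α : Set (Fin n × Fin n)} (hα : IsClosedSubset α) {i j : Fin n}
    (hij : i ≠ j) (r : R) (hmem : (i, j) ∈ α) :
    glSubToSt hα ⟨elemUnit i j hij r, elemUnit_mem_glSub hij r hmem⟩ = stX ⟨(i, j), hij⟩ r := by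
  have : (stEquivGLSub hα).symm ⟨elemUnit i j hij r, elemUnit_mem_glSub hij r hmem⟩ =
      stX ⟨(i, j), hmem⟩ r := by
    rw [MulEquiv.symm_apply_eq]
    exact Subtype.ext
      (coe_stToGLSub_stX (hc := hα.transOffDiag) hα.fst_ne_snd ⟨(i, j), hmem⟩ r).symm
  simp [glSubToSt, this]

def IsGLSubCocone {G : Type*} [Group G]
    (f : ∀ α : Set (Fin n × Fin n), IsClosedSubset α → (glSub R α →* G)) : Prop :=
  ∀ (α β : Set (Fin n × Fin n)) (hα : IsClosedSubset α) (hβ : IsClosedSubset β), α ⊆ β →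
    ∀ (x : (Matrix (Fin n) (Fin n) R)ˣ) (hxα : x ∈ glSub R α) (hxβ : x ∈ glSub R β),
      f β hβ ⟨x, hxβ⟩ = f α hα ⟨x, hxα⟩

def IsGLSubColimit {C : Type} [Group C]
    (κ : ∀ α : Set (Fin n × Fin n), IsClosedSubset α → (glSub R α →* C)) : Prop :=
  ∀ (G : Type) [Group G] (f : ∀ α : Set (Fin n × Fin n), IsClosedSubset α → (glSub R α →* G)),
    IsGLSubCocone f → ∃! h : C →* G, ∀ α hα x, h (κ α hα x) = f α hα x

theorem isGLSubCocone_glSubToSt : IsGLSubCocone (R := R) (n := n) fun _ hα => glSubToSt hα := by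
  intro α β hα hβ hsub x hxα hxβ
  have : (glSubToSt hβ).comp (Subgroup.inclusion (glSub_mono hsub)) = glSubToSt (R := R) hα :=
    glSub_hom_ext fun i j hij r hmem =>
      (glSubToSt_elemUnit hβ hij r (hsub hmem)).trans (glSubToSt_elemUnit hα hij r hmem).symm
  exact DFunLike.congr_fun this ⟨x, hxα⟩

theorem IsGLSubCocone.comp {G H : Type*} [Group G] [Group H]
    {f : ∀ α : Set (Fin n × Fin n), IsClosedSubset α → (glSub R α →* G)} (hf : IsGLSubCocone f)
    (g : G →* H) : IsGLSubCocone fun α hα => g.comp (f α hα) :=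
  fun α β hα hβ hsub x hxα hxβ => congrArg g (hf α β hα hβ hsub x hxα hxβ)

theorem IsGLSubColimit.hom_ext {C : Type} [Group C]
    {κ : ∀ α : Set (Fin n × Fin n), IsClosedSubset α → (glSub R α →* C)}
    (hκ : IsGLSubCocone κ) (huniv : IsGLSubColimit κ) {G : Type} [Group G] {g₁ g₂ : C →* G}
    (h : ∀ α hα x, g₁ (κ α hα x) = g₂ (κ α hα x)) : g₁ = g₂ :=
  (huniv G _ (hκ.comp g₂)).unique (y₁ := g₁) h fun _ _ _ => rfl

end Colimit

section ToColimit

variable {n : ℕ} {R : Type} [Ring R] {C : Type} [Group C]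
  {κ : ∀ α : Set (Fin n × Fin n), IsClosedSubset α → (glSub R α →* C)}

theorem IsGLSubCocone.apply_singleton (hκ : IsGLSubCocone κ) {γ : Set (Fin n × Fin n)}
    (hγ : IsClosedSubset γ) {i j : Fin n} (hij : i ≠ j) (r : R) (hmem : (i, j) ∈ γ) :
    κ {(i, j)} (isClosedSubset_singleton hij) ⟨elemUnit i j hij r, elemUnit_mem_glSub hij r rfl⟩ =
      κ γ hγ ⟨elemUnit i j hij r, elemUnit_mem_glSub hij r hmem⟩ :=
  (hκ _ _ _ hγ (Set.singleton_subset_iff.2 hmem) _ _ _).symm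

def stToColimit (hκ : IsGLSubCocone κ) : Steinberg n R →* C :=
  stLift (fun p r => κ {p.1} (isClosedSubset_singleton p.2)
      ⟨elemUnit p.1.1 p.1.2 p.2 r, elemUnit_mem_glSub p.2 r rfl⟩)
    (fun p a b => (map_mul _ _ _).symm.trans
      (congrArg _ (Subtype.ext (elemUnit_mul_elemUnit p.2 a b))))
    (by
      rintro ⟨⟨i, j⟩, hij : i ≠ j⟩ ⟨⟨k, l⟩, hkl : k ≠ l⟩ (hjk : j ≠ k) (hil : i ≠ l) a b
      have hγ : IsClosedSubset (({i, k} : Set (Fin n)) ×ˢ {j, l}) :=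
        isClosedSubset_prod (by simp [hij.symm, hjk, hil.symm, hkl.symm])
      rw [hκ.apply_singleton hγ hij a (by simp), hκ.apply_singleton hγ hkl b (by simp)]
      exact ((commute_elemUnit hij hkl hjk hil a b).of_map (f := (glSub R _).subtype)
        Subtype.val_injective).map _)
    (by
      rintro ⟨⟨i, j⟩, hij : i ≠ j⟩ ⟨⟨j', l⟩, hjl : j' ≠ l⟩ (rfl : j = j') (hil : i ≠ l) a b
      have hγ := isClosedSubset_triple hij hjl hil
      rw [hκ.apply_singleton hγ hij a (by simp), hκ.apply_singleton hγ hjl b (by simp),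
        hκ.apply_singleton hγ hil (a * b) (by simp), ← map_commutatorElement]
      exact congrArg _ (Subtype.ext (commutatorElement_elemUnit hij hjl hil a b)))

theorem stToColimit_stX (hκ : IsGLSubCocone κ) {i j : Fin n} (hij : i ≠ j) (r : R) :
    stToColimit hκ (stX ⟨(i, j), hij⟩ r) =
      κ {(i, j)} (isClosedSubset_singleton hij)
        ⟨elemUnit i j hij r, elemUnit_mem_glSub hij r rfl⟩ := by
  unfold stToColimit
  exact stLift_stX _ _ _ _ _ r

theorem stToColimit_comp_glSubToSt (hκ : IsGLSubCocone κ) {α : Set (Fin n × Fin n)}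
    (hα : IsClosedSubset α) : (stToColimit hκ).comp (glSubToSt hα) = κ α hα :=
  glSub_hom_ext fun i j hij r hmem => by
    rw [MonoidHom.comp_apply, glSubToSt_elemUnit hα hij r hmem]
    exact (stToColimit_stX hκ hij r).trans (hκ.apply_singleton hα hij r hmem)

theorem comp_glSubToSt {φ : Steinberg n R →* (Matrix (Fin n) (Fin n) R)ˣ}
    (hφ : ∀ (p : {p : Fin n × Fin n // p ∈ deltaSet n}) (r : R),
      φ (PresentedGroup.of (p, r)) = elemUnit p.1.1 p.1.2 p.2 r)
    {α : Set (Fin n × Fin n)} (hα : IsClosedSubset α) :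
    φ.comp (glSubToSt hα) = (glSub R α).subtype :=
  glSub_hom_ext fun i j hij r hmem => by
    rw [MonoidHom.comp_apply, glSubToSt_elemUnit hα hij r hmem]
    exact hφ ⟨(i, j), hij⟩ r

end ToColimit

/-- let `c : colim_{α ∈ Φ} GL_n(R)_α → GL_n(R)` be the canonical homomorphism
induced by the inclusions `GL_n(R)_α ≤ GL_n(R)`.  Then `Ker c` is isomorphic to `K₂(n,R)`,
the kernel of the homomorphism `φ : St_n(R) → GL_n(R)` sending `x_{ij}(r)` to `ε_{ij}(r)`.
Here the colimit is represented by an arbitrary group `C` together with a cocone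
`κ_α : GL_n(R)_α → C` that is compatible with the inclusions `GL_n(R)_α ↪ GL_n(R)_β` and
satisfies the universal property of the colimit, and `c` is pinned down by the requirement
`c ∘ κ_α = (inclusion of GL_n(R)_α into GL_n(R))`. -/
theorem ker_colimit_iso_K2 (n : ℕ) (R : Type) [Ring R]
    (C : Type) [Group C]
    (κ : ∀ (α : Set (Fin n × Fin n)), IsClosedSubset α → (glSub R α →* C))
    (hκ : ∀ (α β : Set (Fin n × Fin n)) (hα : IsClosedSubset α) (hβ : IsClosedSubset β),
      α ⊆ β → ∀ (x : (Matrix (Fin n) (Fin n) R)ˣ) (hxα : x ∈ glSub R α)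
        (hxβ : x ∈ glSub R β), κ β hβ ⟨x, hxβ⟩ = κ α hα ⟨x, hxα⟩)
    (huniv : ∀ (G : Type) [Group G]
      (f : ∀ α : Set (Fin n × Fin n), IsClosedSubset α → (glSub R α →* G)),
      (∀ (α β : Set (Fin n × Fin n)) (hα : IsClosedSubset α) (hβ : IsClosedSubset β),
        α ⊆ β → ∀ (x : (Matrix (Fin n) (Fin n) R)ˣ) (hxα : x ∈ glSub R α)
          (hxβ : x ∈ glSub R β), f β hβ ⟨x, hxβ⟩ = f α hα ⟨x, hxα⟩) →
      ∃! h : C →* G,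
        ∀ (α : Set (Fin n × Fin n)) (hα : IsClosedSubset α) (x : glSub R α),
          h (κ α hα x) = f α hα x)
    (c : C →* (Matrix (Fin n) (Fin n) R)ˣ)
    (hc : ∀ (α : Set (Fin n × Fin n)) (hα : IsClosedSubset α) (x : glSub R α),
      c (κ α hα x) = x.1)
    (φ : Steinberg n R →* (Matrix (Fin n) (Fin n) R)ˣ)
    (hφ : ∀ (p : {p : Fin n × Fin n // p ∈ deltaSet n}) (r : R),
      φ (PresentedGroup.of (p, r)) = elemUnit p.1.1 p.1.2 p.2 r) :
    Nonempty (c.ker ≃* φ.ker) := by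
  obtain ⟨toSt, htoSt, -⟩ := huniv _ _ isGLSubCocone_glSubToSt
  have hof : (stToColimit hκ).comp toSt = MonoidHom.id C :=
    IsGLSubColimit.hom_ext hκ huniv fun α hα x =>
      (congrArg _ (htoSt α hα x)).trans (DFunLike.congr_fun (stToColimit_comp_glSubToSt hκ hα) x)
  have hto : toSt.comp (stToColimit hκ) = MonoidHom.id (Steinberg n R) :=
    StGroup.hom_ext fun ⟨⟨i, j⟩, hij⟩ r => by
      rw [MonoidHom.comp_apply, stToColimit_stX hκ hij r, htoSt, MonoidHom.id_apply]
      exact glSubToSt_elemUnit (isClosedSubset_singleton hij) hij r rfl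
  let e : C ≃* Steinberg n R := MonoidHom.toMulEquiv toSt (stToColimit hκ) hof hto
  have hce : c = φ.comp (e : C →* Steinberg n R) :=
    IsGLSubColimit.hom_ext hκ huniv fun α hα x =>
      (hc α hα x).trans ((DFunLike.congr_fun (comp_glSubToSt hφ hα) x).symm.trans
        (congrArg φ (htoSt α hα x)).symm)
  exact ⟨(MulEquiv.subgroupCongr (by rw [hce, MonoidHom.ker_comp_mulEquiv])).trans
    (e.symm.subgroupMap φ.ker).symm⟩
end

section
/- (Dowker) Suppose given: a function c assigning to each simplex s of K_R an element c(s) ∈ s; a function ψ̄ assigning to each simplex s of K_R an element ψ̄(s) ∈ Y with x R ψ̄(s) for all x ∈ s; and a function ψ assigning to each simplex t of L_R an element ψ(t) ∈ X with ψ(t) R y for all y ∈ t. For a simplex σ' of K'_R (a finite nonempty chain of simplices of K_R under inclusion) write min σ' for its least element and ψ̄(σ') := {ψ̄(s) : s ∈ σ'}; then ψ̄(σ') is a simplex of L_R. Then for every simplex Σ of the second barycentric subdivision K''_R — i.e., every finite nonempty family of simplices of K'_R totally ordered by inclusion — the set {c(min σ') : σ' ∈ Σ} ∪ {ψ(ψ̄(σ'))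 : σ' ∈ Σ} is a simplex of K_R. That is, the two simplicial maps φ_K∘φ'_K and ψ∘ψ̄' from K''_R to K_R are contiguous. -/
/-!
Let `σ₀` be the least element of the chain `S` and `s₀` any simplex of `K_R` in `σ₀`; then `s₀`
lies in every `σ' ∈ S`. Hence `m σ' ⊆ s₀`, so every vertex `c (m σ')` is related to `ψ̄ s₀`;
and `ψ̄ s₀ ∈ ψ̄ σ'`, so every `ψ (ψ̄ σ')` is related to `ψ̄ s₀` too. Thus `ψ̄ s₀` spans the union.
-/

/-- A simplex of the Dowker complex `K_R`. -/
def KSimp {X Y : Type*} (R : X → Y → Prop) (s : Set X) : Prop :=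
  s.Finite ∧ s.Nonempty ∧ ∃ y : Y, ∀ x ∈ s, R x y

/-- A simplex of the dual Dowker complex `L_R`. -/
def LSimp {X Y : Type*} (R : X → Y → Prop) (t : Set Y) : Prop :=
  t.Finite ∧ t.Nonempty ∧ ∃ x : X, ∀ y ∈ t, R x y

/-- A simplex of the barycentric subdivision `K'_R`: a finite nonempty chain (under
inclusion) of simplices of `K_R`. -/
def KSubSimp {X Y : Type*} (R : X → Y → Prop) (σ' : Set (Set X)) : Prop :=
  σ'.Finite ∧ σ'.Nonempty ∧ (∀ s ∈ σ', KSimp R s) ∧ IsChain (· ⊆ ·) σ'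

theorem IsChain.exists_isLeast_of_finite {α : Type*} [Preorder α] {s : Set α}
    (hc : IsChain (· ≤ ·) s) (hf : s.Finite) (hne : s.Nonempty) : ∃ a, IsLeast s a := by
  obtain ⟨a, ha⟩ := hf.exists_minimal hne
  have hc' : IsChain (· ≥ ·) s := hc.symm
  exact ⟨a, hc'.directedOn.minimal_iff_isLeast.1 ha⟩

section Dowker

variable {X Y : Type*} {R : X → Y → Prop}

theorem KSubSimp.kSimp_of_mem {σ' : Set (Set X)} (hσ' : KSubSimp R σ') {s : Set X}
    (hs : s ∈ σ') : KSimp R s :=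
  hσ'.2.2.1 s hs

theorem KSubSimp.exists_isLeast {σ' : Set (Set X)} (hσ' : KSubSimp R σ') :
    ∃ s, IsLeast σ' s :=
  hσ'.2.2.2.exists_isLeast_of_finite hσ'.1 hσ'.2.1

theorem KSubSimp.lSimp_image {ψb : Set X → Y}
    (hψb : ∀ s : Set X, KSimp R s → ∀ x ∈ s, R x (ψb s))
    {σ' : Set (Set X)} (hσ' : KSubSimp R σ') : LSimp R (ψb '' σ') := by
  obtain ⟨s₀, hs₀σ', hs₀le⟩ := hσ'.exists_isLeast
  obtain ⟨x, hx⟩ := (hσ'.kSimp_of_mem hs₀σ').2.1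
  refine ⟨hσ'.1.image ψb, hσ'.2.1.image ψb, x, ?_⟩
  rintro _ ⟨s, hs, rfl⟩
  exact hψb s (hσ'.kSimp_of_mem hs) x (hs₀le hs hx)

theorem kSimp_image_union_of_forall_mem (c : Set X → X) (hc : ∀ s : Set X, KSimp R s → c s ∈ s)
    (ψb : Set X → Y) (hψb : ∀ s : Set X, KSimp R s → ∀ x ∈ s, R x (ψb s))
    (ψ : Set Y → X) (hψ : ∀ t : Set Y, LSimp R t → ∀ y ∈ t, R (ψ t) y)
    (m : Set (Set X) → Set X)
    (hm : ∀ σ' : Set (Set X), KSubSimp R σ' → m σ' ∈ σ' ∧ ∀ s ∈ σ', m σ' ⊆ s)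
    {S : Set (Set (Set X))} (hSfin : S.Finite) (hSne : S.Nonempty) (hS : ∀ σ' ∈ S, KSubSimp R σ')
    {s₀ : Set X} (hs₀ : ∀ σ' ∈ S, s₀ ∈ σ') :
    KSimp R (((fun σ' => c (m σ')) '' S) ∪ ((fun σ' => ψ (ψb '' σ')) '' S)) := by
  obtain ⟨σ₀, hσ₀⟩ := hSne
  have hs₀simp : KSimp R s₀ := (hS σ₀ hσ₀).kSimp_of_mem (hs₀ σ₀ hσ₀)
  refine ⟨(hSfin.image _).union (hSfin.image _), ⟨_, .inl ⟨σ₀, hσ₀, rfl⟩⟩, ψb s₀, ?_⟩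
  rintro _ (⟨σ', hσ', rfl⟩ | ⟨σ', hσ', rfl⟩)
  · obtain ⟨hmσ', hmle⟩ := hm σ' (hS σ' hσ')
    have hc_mem : c (m σ') ∈ s₀ := hmle s₀ (hs₀ σ' hσ') (hc _ ((hS σ' hσ').kSimp_of_mem hmσ'))
    exact hψb s₀ hs₀simp _ hc_mem
  · exact hψ _ ((hS σ' hσ').lSimp_image hψb) _ ⟨s₀, hs₀ σ' hσ', rfl⟩

end Dowker

/-- Dowker: given choice functions `c` (choosing a vertex of each simplex of
`K_R`), `ψb = ψ̄` (assigning to each simplex `s` of `K_R` an element of `Y` related to all of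
`s`) and `ψ` (assigning to each simplex `t` of `L_R` an element of `X` related to all of
`t`), and a function `m` picking out the least vertex of each simplex of `K'_R`, we have:
`ψ̄` maps simplices of `K'_R` to simplices of `L_R`, and for every simplex `S` of the second
barycentric subdivision `K''_R`, the set
`{c (min σ') : σ' ∈ S} ∪ {ψ (ψ̄ σ') : σ' ∈ S}` is a simplex of `K_R`; that is, the two
simplicial maps `φ_K ∘ φ'_K` and `ψ ∘ ψ̄'` from `K''_R` to `K_R` are contiguous. -/
theorem dowker_contiguous {X Y : Type*} (R : X → Y → Prop)
    (c : Set X → X) (hc : ∀ s : Set X, KSimp R s → c s ∈ s)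
    (ψb : Set X → Y) (hψb : ∀ s : Set X, KSimp R s → ∀ x ∈ s, R x (ψb s))
    (ψ : Set Y → X) (hψ : ∀ t : Set Y, LSimp R t → ∀ y ∈ t, R (ψ t) y)
    (m : Set (Set X) → Set X)
    (hm : ∀ σ' : Set (Set X), KSubSimp R σ' → m σ' ∈ σ' ∧ ∀ s ∈ σ', m σ' ⊆ s) :
    (∀ σ' : Set (Set X), KSubSimp R σ' → LSimp R (ψb '' σ')) ∧
      ∀ S : Set (Set (Set X)), S.Finite → S.Nonempty → (∀ σ' ∈ S, KSubSimp R σ') →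
        IsChain (· ⊆ ·) S →
        KSimp R (((fun σ' => c (m σ')) '' S) ∪ ((fun σ' => ψ (ψb '' σ')) '' S)) := by
  refine ⟨fun σ' hσ' => hσ'.lSimp_image hψb, fun S hSfin hSne hS hSchain => ?_⟩
  obtain ⟨σ₀, hσ₀S, hσ₀le⟩ := hSchain.exists_isLeast_of_finite hSfin hSne
  obtain ⟨s₀, hs₀⟩ := (hS σ₀ hσ₀S).2.1
  exact kSimp_image_union_of_forall_mem c hc ψb hψb ψ hψ m hm hSfin ⟨σ₀, hσ₀S⟩ hS
    fun σ' hσ' => hσ₀le hσ' hs₀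
end
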